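/- Let H₁, …, H_k be distinct (not necessarily disjoint) hexagons in the Kagome lattice and F_i = F_{H_i} the associated alternating ±1 eigenfunctions supported on the hexagon vertices. Then F₁, …, F_k are linearly independent. -/

import Mathlib

open Complex

/-- `w₁ = 1`. -/
noncomputable def kagomeW₁ : ℂ := 1

/-- `w₂ = e^{iπ/3}`. -/
noncomputable def kagomeW₂ : ℂ := Complex.exp (Real.pi * Complex.I / 3)

/-- The vertex set of the Kagome lattice:
`V = (2ℤw₁+2ℤw₂) ∪ (w₁+2ℤw₁+2ℤw₂) ∪ (w₂+2ℤw₁+2ℤw₂) ⊂ ℂ`. -/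
def kagomeV : Set ℂ :=
  {v | ∃ m n : ℤ,
      v = 2 * (m : ℂ) * kagomeW₁ + 2 * (n : ℂ) * kagomeW₂ ∨
      v = kagomeW₁ + 2 * (m : ℂ) * kagomeW₁ + 2 * (n : ℂ) * kagomeW₂ ∨
      v = kagomeW₂ + 2 * (m : ℂ) * kagomeW₁ + 2 * (n : ℂ) * kagomeW₂}

/-- Adjacency in the Kagome lattice: two vertices at Euclidean distance `1`. -/
def kagomeAdj (v w : ℂ) : Prop :=
  v ∈ kagomeV ∧ w ∈ kagomeV ∧ ‖v - w‖ = 1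

/-- The combinatorial (normalized) Laplacian of the Kagome lattice:
`(Δ F)(v) = (1/deg v) ∑_{w∼v} (F(v) - F(w))`, where every vertex has degree `4`.
(The sum over the finitely many neighbours is expressed as a `tsum`.) -/
noncomputable def kagomeLap (F : ℂ → ℝ) (v : ℂ) : ℝ :=
  (1 / 4) * ∑' w : {w : ℂ // kagomeAdj v w}, (F v - F (w : ℂ))

/-- `w₀` is the centre of a hexagon of the Kagome lattice: its six prospective vertices
`w₀ + e^{kπi/3}`, `k = 0,…,5`, all belong to the lattice. -/
def IsHexCenter (w₀ : ℂ) : Prop :=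
  ∀ k : Fin 6, w₀ + Complex.exp (((k : ℕ) : ℂ) * Real.pi * Complex.I / 3) ∈ kagomeV

/-- The alternating `±1` function supported on the vertices of the hexagon with centre `w₀`:
`F_H(v) = (-1)^k` if `v = w₀ + e^{kπi/3}` and `0` otherwise. -/
noncomputable def hexFun (w₀ : ℂ) : ℂ → ℝ := fun v =>
  if h : ∃ k : Fin 6, v = w₀ + Complex.exp (((k : ℕ) : ℂ) * Real.pi * Complex.I / 3) then
    (-1 : ℝ) ^ ((h.choose : ℕ)) else 0

/-!
Order the hexagons with nonzero coefficient in a vanishing linear combination by the real part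
of their centre and take a rightmost one, with centre `w₀`. Its rightmost vertex `w₀ + 1` lies on
no other of these hexagons: a hexagon with centre `w'` has its vertices on the unit circle about
`w'`, and the only point of that circle with real part `≥ w'.re + 1` is `w' + 1`. Evaluating the
combination at `w₀ + 1` shows that the coefficient of `w₀` vanishes after all.
-/

theorem linearIndependent_of_exists_isolating_point {ι X R : Type*} [Ring R] [NoZeroDivisors R]
    (f : ι → X → R)
    (h : ∀ s : Finset ι, s.Nonempty →
      ∃ i ∈ s, ∃ x, f i x ≠ 0 ∧ ∀ j ∈ s, j ≠ i → f j x = 0) :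
    LinearIndependent R f := by
  classical
  rw [linearIndependent_iff']
  intro s g hg
  by_contra! hsupp
  obtain ⟨i, hi, x, hfi, hfj⟩ := h (s.filter (g · ≠ 0)) <| by
    obtain ⟨i, his, hgi⟩ := hsupp
    exact ⟨i, Finset.mem_filter.2 ⟨his, hgi⟩⟩
  obtain ⟨his, hgi⟩ := Finset.mem_filter.1 hi
  have hx : ∑ j ∈ s, g j * f j x = g i * f i x := by
    refine Finset.sum_eq_single_of_mem i his fun j hjs hji => ?_
    by_cases hgj : g j = 0
    · rw [hgj, zero_mul]
    · rw [hfj j (Finset.mem_filter.2 ⟨hjs, hgj⟩) hji, mul_zero]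
  have hzero : ∑ j ∈ s, g j * f j x = 0 := by
    simpa only [Finset.sum_apply, Pi.smul_apply, smul_eq_mul, Pi.zero_apply] using congrFun hg x
  exact mul_ne_zero hgi hfi (hx ▸ hzero)

theorem Complex.eq_one_of_norm_eq_one_of_one_le_re {z : ℂ} (hz : ‖z‖ = 1) (hre : 1 ≤ z.re) :
    z = 1 := by
  have hre_eq : z.re = 1 := le_antisymm (hz ▸ re_le_norm z) hre
  have him : z.im = 0 := abs_re_eq_norm.1 (by rw [hre_eq, hz, abs_one])
  exact Complex.ext hre_eq him

theorem norm_sub_eq_one_of_hexFun_ne_zero {w₀ v : ℂ} (h : hexFun w₀ v ≠ 0) : ‖v - w₀‖ = 1 := by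
  rw [hexFun, dite_ne_right_iff] at h
  obtain ⟨⟨k, rfl⟩, -⟩ := h
  have harg : ((k : ℕ) : ℂ) * Real.pi * I / 3 = (((k : ℕ) * Real.pi / 3 : ℝ) : ℂ) * I := by
    push_cast
    ring
  rw [add_sub_cancel_left, harg, norm_exp_ofReal_mul_I]

theorem hexFun_self_add_one_ne_zero (w₀ : ℂ) : hexFun w₀ (w₀ + 1) ≠ 0 := by
  have hvertex : ∃ k : Fin 6, w₀ + 1 = w₀ + exp (((k : ℕ) : ℂ) * Real.pi * I / 3) :=
    ⟨0, by simp⟩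
  rw [hexFun, dif_pos hvertex]
  exact pow_ne_zero _ (neg_ne_zero.2 one_ne_zero)

theorem hexFun_add_one_eq_zero_of_re_le {w' w₀ : ℂ} (hne : w' ≠ w₀) (hle : w'.re ≤ w₀.re) :
    hexFun w' (w₀ + 1) = 0 := by
  by_contra h
  have hone : w₀ + 1 - w' = 1 :=
    eq_one_of_norm_eq_one_of_one_le_re (norm_sub_eq_one_of_hexFun_ne_zero h)
      (by simp only [sub_re, add_re, one_re]; linarith)
  exact hne (by linear_combination -hone)

theorem hexFun_linearIndependent_general (k : ℕ) (w : Fin k → ℂ)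
    (hdistinct : Function.Injective w) :
    LinearIndependent ℝ (fun i : Fin k => hexFun (w i)) := by
  refine linearIndependent_of_exists_isolating_point _ fun s hs => ?_
  obtain ⟨i, his, hmax⟩ := s.exists_max_image (fun i => (w i).re) hs
  exact ⟨i, his, w i + 1, hexFun_self_add_one_ne_zero (w i), fun j hjs hji =>
    hexFun_add_one_eq_zero_of_re_le (hdistinct.ne hji) (hmax j hjs)⟩

/-- The alternating eigenfunctions `F_{H₁}, …, F_{H_k}` associated to distinct
hexagons `H₁, …, H_k` of the Kagome lattice are linearly independent. -/
theorem hexFun_linearIndependent (k : ℕ) (w : Fin k → ℂ)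
    (hhex : ∀ i, IsHexCenter (w i)) (hdistinct : Function.Injective w) :
    LinearIndependent ℝ (fun i : Fin k => hexFun (w i)) :=
  hexFun_linearIndependent_general k w hdistinct
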